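/- arXiv:2002.10913 — 7 statements merged into one kernel-verified Lean document; each statement's English description precedes it below -/
import Mathlib

section
/- Let x̄ be a local minimizer of the problem min (1/2)‖Ax−b‖² subject to ‖x‖₀ ≤ s. Then x̄ is M-stationary, i.e., (Aᵀ(Ax̄ − b))ⱼ = 0 for all j in the support of x̄. -/
open Matrix Finset
open scoped Classical

noncomputable section

/-- Support of a vector as a `Finset`. -/
def supp {n : ℕ} (x : Fin n → ℝ) : Finset (Fin n) :=
  Finset.univ.filter (fun j => x j ≠ 0)

/-- The ℓ₀ "norm": number of nonzero entries. -/
def norm0 {n : ℕ} (x : Fin n → ℝ) : ℕ := (supp x).card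

/-- Objective function of the sparse recovery problem: `f(x) = (1/2)‖Ax - b‖²`. -/
def objf {m n : ℕ} (A : Matrix (Fin m) (Fin n) ℝ) (b : Fin m → ℝ) (x : Fin n → ℝ) : ℝ :=
  (1 / 2) * ∑ i, (A.mulVec x i - b i) ^ 2

/-- Gradient of the objective: `∇f(x) = Aᵀ(Ax - b)`. -/
def grad {m n : ℕ} (A : Matrix (Fin m) (Fin n) ℝ) (b : Fin m → ℝ) (x : Fin n → ℝ) :
    Fin n → ℝ :=
  Aᵀ.mulVec (A.mulVec x - b)

/-- M-stationarity: the gradient vanishes on the support. -/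
def MStat {m n : ℕ} (A : Matrix (Fin m) (Fin n) ℝ) (b : Fin m → ℝ) (x : Fin n → ℝ) : Prop :=
  ∀ j, x j ≠ 0 → grad A b x j = 0

/-- Submatrix of columns indexed by `S`. -/
def cols {m n : ℕ} (A : Matrix (Fin m) (Fin n) ℝ) (S : Finset (Fin n)) :
    Matrix (Fin m) ↥S ℝ :=
  A.submatrix id (fun j => (j : Fin n))

/-- `s`-regularity: every submatrix of `s` columns has rank `s`. -/
def sReg {m n : ℕ} (A : Matrix (Fin m) (Fin n) ℝ) (s : ℕ) : Prop :=
  ∀ I : Finset (Fin n), I.card = s → (cols A I).rank = s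

/-- Nondegeneracy of an M-stationary point: ND1 and ND2. -/
def NDeg {m n : ℕ} (A : Matrix (Fin m) (Fin n) ℝ) (b : Fin m → ℝ) (s : ℕ)
    (x : Fin n → ℝ) : Prop :=
  (norm0 x < s → ∀ i, x i = 0 → grad A b x i ≠ 0) ∧
  LinearIndependent ℝ (fun j : ↥(supp x) => fun i => A i (j : Fin n))

/-- Local minimizer of the sparse recovery problem. -/
def IsLocalMinSR {m n : ℕ} (A : Matrix (Fin m) (Fin n) ℝ) (b : Fin m → ℝ) (s : ℕ)
    (x : Fin n → ℝ) : Prop :=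
  norm0 x ≤ s ∧ ∃ U ∈ nhds x, ∀ y ∈ U, norm0 y ≤ s → objf A b x ≤ objf A b y

theorem stmt_3 {m n s : ℕ} (A : Matrix (Fin m) (Fin n) ℝ) (b : Fin m → ℝ)
    (x : Fin n → ℝ) (hmin : IsLocalMinSR A b s x) : MStat A b x := by
  obtain ⟨hs, U, hU, hloc⟩ := hmin
  intro j hj
  set g : ℝ := grad A b x j with hg
  set c : ℝ := ∑ i, (A i j) ^ 2 with hc
  -- the perturbation curve
  set φ : ℝ → (Fin n → ℝ) := fun t => x + t • (Pi.single j 1 : Fin n → ℝ) with hφ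
  have hmv : ∀ t i, A.mulVec (φ t) i = A.mulVec x i + t * A i j := by
    intro t i
    simp only [hφ, Matrix.mulVec, dotProduct, Pi.add_apply, Pi.smul_apply, smul_eq_mul,
      Pi.single_apply, mul_add, Finset.sum_add_distrib]
    congr 1
    rw [Finset.sum_eq_single j]
    · simp [mul_comm]
    · intro k _ hk; simp [hk]
    · simp
  have hgeq : g = ∑ i, (A.mulVec x i - b i) * A i j := by
    simp only [hg, grad, Matrix.mulVec, dotProduct, Matrix.transpose_apply, Pi.sub_apply]
    exact Finset.sum_congr rfl (fun i _ => by ring)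
  have key : ∀ t, objf A b (φ t) = objf A b x + t * g + t ^ 2 * (c / 2) := by
    intro t
    rw [hgeq, hc]
    unfold objf
    rw [show ∑ i, (A.mulVec (φ t) i - b i) ^ 2 =
        ∑ i, ((A.mulVec x i - b i) ^ 2 + (2 * t) * ((A.mulVec x i - b i) * A i j)
          + t ^ 2 * (A i j) ^ 2) from
      Finset.sum_congr rfl (fun i _ => by rw [hmv]; ring)]
    rw [Finset.sum_add_distrib, Finset.sum_add_distrib, ← Finset.mul_sum, ← Finset.mul_sum]
    ring
  -- norm0 is preserved
  have hn0 : ∀ t, norm0 (φ t) ≤ s := by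
    intro t
    refine le_trans (Finset.card_le_card ?_) hs
    intro k hk
    simp only [supp, Finset.mem_filter, Finset.mem_univ, true_and] at hk ⊢
    by_cases hkj : k = j
    · subst hkj; exact hj
    · simpa [hφ, Pi.single_apply, hkj] using hk
  -- local min of the scalar function
  have hcont : Continuous φ := by fun_prop
  have hφ0 : φ 0 = x := by simp [hφ]
  have hmem : ∀ᶠ t in nhds (0 : ℝ), φ t ∈ U := by
    have := hcont.continuousAt (x := (0 : ℝ))
    rw [ContinuousAt, hφ0] at this
    exact this hU
  have hlm : IsLocalMin (fun t => objf A b (φ t)) 0 := by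
    filter_upwards [hmem] with t ht
    simpa [hφ0] using hloc (φ t) ht (hn0 t)
  have hder : HasDerivAt (fun t => objf A b (φ t)) g 0 := by
    have h1 : HasDerivAt (fun t : ℝ => objf A b x + t * g + t ^ 2 * (c / 2))
        (0 + 1 * g + (2 * (0:ℝ) ^ 1) * (c / 2)) 0 :=
      ((hasDerivAt_const _ _).add ((hasDerivAt_id 0).mul_const g)).add
        ((hasDerivAt_pow 2 0).mul_const (c / 2))
    have h2 : (fun t => objf A b (φ t)) = fun t : ℝ => objf A b x + t * g + t ^ 2 * (c / 2) :=
      funext key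
    rw [h2]
    simpa using h1
  have := hlm.deriv_eq_zero
  rwa [hder.deriv] at this
end
end

section
/- Let x̄ be a nondegenerate M-stationary point of the sparse recovery problem with ‖x̄‖₀ = s (active sparsity constraint). Then x̄ is a local minimizer of min (1/2)‖Ax−b‖² subject to ‖x‖₀ ≤ s. -/
open Matrix Finset
open scoped Classical

noncomputable section

theorem stmt_4 {m n s : ℕ} (A : Matrix (Fin m) (Fin n) ℝ) (b : Fin m → ℝ)
    (x : Fin n → ℝ) (hstat : MStat A b x) (hnd : NDeg A b s x)
    (hact : norm0 x = s) : IsLocalMinSR A b s x := by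
  refine ⟨hact.le, {y | ∀ j, x j ≠ 0 → y j ≠ 0}, ?_, ?_⟩
  · have hopen : IsOpen {y : Fin n → ℝ | ∀ j, x j ≠ 0 → y j ≠ 0} := by
      have hset : {y : Fin n → ℝ | ∀ j, x j ≠ 0 → y j ≠ 0}
          = ⋂ j ∈ supp x, (fun y : Fin n → ℝ => y j) ⁻¹' {(0:ℝ)}ᶜ := by
        ext y; simp [supp]
      rw [hset]
      exact isOpen_biInter_finset fun j _ =>
        (continuous_apply j).isOpen_preimage _ isOpen_compl_singleton
    exact hopen.mem_nhds (fun j hj => hj)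
  · intro y hy hys
    have hsub : supp x ⊆ supp y := fun j hj => by
      simp only [supp, Finset.mem_filter, Finset.mem_univ, true_and] at hj ⊢
      exact hy j hj
    have heq : supp y = supp x := by
      have hc : (supp y).card ≤ (supp x).card := by
        have : norm0 y ≤ norm0 x := by rw [hact]; exact hys
        exact this
      exact (Finset.eq_of_subset_of_card_le hsub hc).symm
    have hy0 : ∀ j, x j = 0 → y j = 0 := by
      intro j hj
      by_contra h
      have : j ∈ supp y := by simp [supp, h]
      rw [heq] at this
      simp [supp, hj] at this
    set v := fun i => A.mulVec x i - b i with hv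
    set w := fun i => A.mulVec (y - x) i with hw
    have hxy : ∀ i, A.mulVec y i - b i = v i + w i := by
      intro i
      simp only [hv, hw, Matrix.mulVec_sub, Pi.sub_apply]
      ring
    have hcross : ∑ i, v i * w i = 0 := by
      have h1 : ∀ i, v i * w i = ∑ j, v i * A i j * (y j - x j) := by
        intro i
        simp only [hw, Matrix.mulVec, dotProduct, Pi.sub_apply, Finset.mul_sum]
        exact Finset.sum_congr rfl fun j _ => by ring
      calc ∑ i, v i * w i = ∑ i, ∑ j, v i * A i j * (y j - x j) := by
            exact Finset.sum_congr rfl fun i _ => h1 i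
        _ = ∑ j, (∑ i, A i j * v i) * (y j - x j) := by
            rw [Finset.sum_comm]
            exact Finset.sum_congr rfl fun j _ => by
              rw [Finset.sum_mul]
              exact Finset.sum_congr rfl fun i _ => by ring
        _ = 0 := Finset.sum_eq_zero fun j _ => by
            by_cases hj : x j = 0
            · rw [hy0 j hj, hj]; ring
            · have hg := hstat j hj
              simp only [grad, Matrix.mulVec, dotProduct, Matrix.transpose_apply,
                Pi.sub_apply] at hg
              have : (∑ i, A i j * v i) = 0 := by
                rw [← hg]
                exact Finset.sum_congr rfl fun i _ => by
                  simp [hv, Matrix.mulVec, dotProduct]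
              rw [this, zero_mul]
    have hobj : objf A b y = objf A b x + ∑ i, v i * w i + (1/2) * ∑ i, (w i)^2 := by
      simp only [objf]
      have : ∀ i, (A.mulVec y i - b i)^2 = (v i)^2 + 2 * (v i * w i) + (w i)^2 := by
        intro i; rw [hxy i]; ring
      rw [Finset.sum_congr rfl fun i _ => this i]
      rw [Finset.sum_add_distrib, Finset.sum_add_distrib, ← Finset.mul_sum]
      ring
    rw [hobj, hcross]
    have : 0 ≤ (1/2 : ℝ) * ∑ i, (w i)^2 := by
      apply mul_nonneg (by norm_num)
      exact Finset.sum_nonneg fun i _ => sq_nonneg _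
    linarith
end
end

section
/- The set of s-regular matrices is dense in ℝ^{m×n} (assuming s ≤ m): every matrix can be approximated arbitrarily well by matrices all of whose s-column submatrices have rank s. -/
open Matrix Finset Filter
open scoped Classical Topology

noncomputable section

/-- Equiv used to pick out `s` columns. -/
def colEquiv {n s : ℕ} (I : Finset (Fin n)) (hI : I.card = s) : Fin s ≃ ↥I :=
  (Fintype.equivFinOfCardEq ((Fintype.card_coe I).trans hI)).symm

/-- Square `s × s` submatrix: first `s` rows, columns in `I`. -/
def sqSub {m n s : ℕ} (hs : s ≤ m) (M : Matrix (Fin m) (Fin n) ℝ) (I : Finset (Fin n))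
    (hI : I.card = s) : Matrix (Fin s) (Fin s) ℝ :=
  fun u v => M (Fin.castLE hs u) ((colEquiv I hI v : Fin n))

lemma rank_submatrix_le' {α β γ δ : Type*} [Fintype α] [Fintype β] [Fintype γ] [Fintype δ]
    [DecidableEq α] [DecidableEq β]
    (M : Matrix α β ℝ) (f : γ → α) (g : δ → β) : (M.submatrix f g).rank ≤ M.rank := by
  have h1 : ((1 : Matrix α α ℝ).submatrix f ⇑(Equiv.refl α)) * M = M.submatrix f id := by
    rw [Matrix.one_submatrix_mul]
    rfl
  have h2 : (M.submatrix f id) * ((1 : Matrix β β ℝ).submatrix ⇑(Equiv.refl β) g)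
      = M.submatrix f g := by
    rw [Matrix.mul_submatrix_one]
    rfl
  calc (M.submatrix f g).rank
      = ((((1 : Matrix α α ℝ).submatrix f ⇑(Equiv.refl α)) * M)
          * ((1 : Matrix β β ℝ).submatrix ⇑(Equiv.refl β) g)).rank := by rw [h1, h2]
    _ ≤ (((1 : Matrix α α ℝ).submatrix f ⇑(Equiv.refl α)) * M).rank :=
        Matrix.rank_mul_le_left _ _
    _ ≤ M.rank := Matrix.rank_mul_le_right _ _

lemma finite_bad {s : ℕ} (A' V' : Matrix (Fin s) (Fin s) ℝ) (hV : V'.det ≠ 0) :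
    {t : ℝ | t ≠ 0 ∧ (A' + t • V').det = 0}.Finite := by
  set M : Matrix (Fin s) (Fin s) (Polynomial ℝ) :=
    Matrix.of fun u v => Polynomial.C (V' u v) + Polynomial.X * Polynomial.C (A' u v) with hM
  have heval : ∀ u : ℝ, Polynomial.eval u M.det = (V' + u • A').det := by
    intro u
    rw [← Polynomial.coe_evalRingHom, RingHom.map_det]
    congr 1
    ext i j
    rw [RingHom.mapMatrix_apply, Matrix.map_apply, hM, Matrix.of_apply]
    rw [Matrix.add_apply, Matrix.smul_apply]
    simp [smul_eq_mul]
    ring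
  have hM0 : M.det ≠ 0 := by
    intro h
    have h0 := heval 0
    rw [h] at h0
    simp at h0
    exact hV h0.symm
  have hfin := (Polynomial.finite_setOf_isRoot hM0).image (fun r => r⁻¹)
  apply Set.Finite.subset hfin
  rintro t ⟨ht, hdet⟩
  refine ⟨t⁻¹, ?_, inv_inv t⟩
  have hA : (A' + t • V') = t • (V' + t⁻¹ • A') := by
    ext i j
    simp [Matrix.add_apply, Matrix.smul_apply, smul_eq_mul]
    field_simp
    ring
  rw [hA, Matrix.det_smul] at hdet
  have hroot : (V' + t⁻¹ • A').det = 0 := by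
    rcases mul_eq_zero.mp hdet with h | h
    · exact absurd h (pow_ne_zero _ ht)
    · exact h
  show Polynomial.IsRoot M.det t⁻¹
  rw [Polynomial.IsRoot, heval, hroot]

theorem stmt_8 {m n s : ℕ} (hs : s ≤ m) :
    Dense {A : Matrix (Fin m) (Fin n) ℝ | sReg A s} := by
  intro A
  set V : Matrix (Fin m) (Fin n) ℝ := fun i j => (((j : ℕ) : ℝ)) ^ (i : ℕ) with hV
  -- the Vandermonde square submatrices of V have nonzero determinant
  have hVdet : ∀ (I : Finset (Fin n)) (hI : I.card = s), (sqSub hs V I hI).det ≠ 0 := by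
    intro I hI
    have : sqSub hs V I hI = (Matrix.vandermonde
        (fun v : Fin s => (((colEquiv I hI v : Fin n) : ℕ) : ℝ)))ᵀ := by
      ext u v
      simp [sqSub, hV, Matrix.vandermonde, Matrix.transpose_apply, Fin.coe_castLE]
    rw [this, Matrix.det_transpose]
    rw [Matrix.det_vandermonde_ne_zero_iff]
    intro a b h
    exact (colEquiv I hI).injective (Subtype.ext (Fin.val_injective (Nat.cast_injective h)))
  set Bad : Set ℝ := {0} ∪ ⋃ (I : Finset (Fin n)), ⋃ (hI : I.card = s),
    {t : ℝ | t ≠ 0 ∧ (sqSub hs A I hI + t • sqSub hs V I hI).det = 0} with hBad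
  have hBadFin : Bad.Finite := by
    apply Set.Finite.union (Set.finite_singleton 0)
    apply Set.finite_iUnion
    intro I
    apply Set.finite_iUnion
    intro hI
    exact finite_bad _ _ (hVdet I hI)
  apply mem_closure_of_tendsto (f := fun t : ℝ => A + t • V) (b := 𝓝[≠] (0 : ℝ))
  · have hc : Continuous (fun t : ℝ => A + t • V) :=
      continuous_const.add (continuous_id.smul continuous_const)
    simpa using (hc.tendsto 0).mono_left nhdsWithin_le_nhds
  · have h1 : ∀ᶠ t in 𝓝[≠] (0 : ℝ), t ∉ Bad \ {0} := by
      apply Filter.Eventually.filter_mono nhdsWithin_le_nhds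
      have hcl : IsClosed (Bad \ {0}) := (hBadFin.subset Set.diff_subset).isClosed
      have : (Bad \ {0})ᶜ ∈ 𝓝 (0 : ℝ) :=
        hcl.isOpen_compl.mem_nhds (by simp)
      exact this
    have h2 : ∀ᶠ t in 𝓝[≠] (0 : ℝ), t ≠ 0 := by
      exact eventually_mem_nhdsWithin.mono (fun t ht => ht)
    filter_upwards [h1, h2] with t ht hne
    intro I hI
    have htB : t ∉ Bad := fun h => ht ⟨h, hne⟩
    -- determinant of the square submatrix is nonzero
    have hdet : (sqSub hs A I hI + t • sqSub hs V I hI).det ≠ 0 := by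
      intro h
      exact htB (Or.inr (Set.mem_iUnion.mpr ⟨I, Set.mem_iUnion.mpr ⟨hI, ⟨hne, h⟩⟩⟩))
    have hsq : (cols (A + t • V) I).submatrix (Fin.castLE hs) ⇑(colEquiv I hI)
        = sqSub hs A I hI + t • sqSub hs V I hI := by
      ext u v
      simp [cols, sqSub, Matrix.submatrix_apply, Matrix.add_apply, Matrix.smul_apply, smul_eq_mul]
    have hrank_sq : ((cols (A + t • V) I).submatrix (Fin.castLE hs) ⇑(colEquiv I hI)).rank = s := by
      rw [hsq]
      rw [Matrix.rank_of_isUnit _ ((Matrix.isUnit_iff_isUnit_det _).mpr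
        (isUnit_iff_ne_zero.mpr hdet))]
      simp
    refine le_antisymm ?_ ?_
    · calc (cols (A + t • V) I).rank ≤ Fintype.card ↥I := Matrix.rank_le_card_width _
        _ = s := by rw [Fintype.card_coe, hI]
    · calc s = ((cols (A + t • V) I).submatrix (Fin.castLE hs) ⇑(colEquiv I hI)).rank :=
          hrank_sq.symm
        _ ≤ (cols (A + t • V) I).rank := rank_submatrix_le' _ _ _
end
end

section
/- Suppose the M-stationary point x̄ of the sparse recovery problem violates ND2, i.e., the columns of A on the support S of x̄ are linearly dependent. Then x̄ is not an isolated M-stationary point: in every neighborhood of x̄ there exists another M-stationary point with the same support. -/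
open Matrix Finset
open scoped Classical

noncomputable section

theorem stmt_11 {m n s : ℕ} (A : Matrix (Fin m) (Fin n) ℝ) (b : Fin m → ℝ)
    (x : Fin n → ℝ) (hfeas : norm0 x ≤ s) (hstat : MStat A b x)
    (hnd2 : ¬ LinearIndependent ℝ (fun j : ↥(supp x) => fun i => A i (j : Fin n))) :
    ∀ U ∈ nhds x, ∃ y ∈ U, y ≠ x ∧ MStat A b y ∧ supp y = supp x := by

  intro U hU
  -- extract a nonzero kernel vector supported on supp x
  rw [Fintype.not_linearIndependent_iff] at hnd2
  obtain ⟨g, hg0, i0, hi0⟩ := hnd2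
  set c : Fin n → ℝ := fun j => if h : j ∈ supp x then g ⟨j, h⟩ else 0 with hc
  have hcsupp : ∀ j, j ∉ supp x → c j = 0 := by
    intro j hj; simp [hc, hj]
  have hAc : A.mulVec c = 0 := by
    funext i
    have := congrFun hg0 i
    simp only [Finset.sum_apply, Pi.smul_apply, smul_eq_mul, Pi.zero_apply] at this
    simp only [Matrix.mulVec, dotProduct, Pi.zero_apply]
    rw [← Finset.sum_subset (Finset.subset_univ (supp x))]
    · rw [← this, ← Finset.sum_attach (supp x) (fun j => A i j * c j)]
      apply Finset.sum_congr rfl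
      intro j _
      simp [hc, j.2, mul_comm]
    · intro j _ hj
      simp [hcsupp j hj]
  -- choose small t ≠ 0
  have hcont : Continuous fun t : ℝ => x + t • c := continuous_const.add (continuous_id.smul continuous_const)
  have h0 : (fun t : ℝ => x + t • c) 0 = x := by simp
  have hUev : ∀ᶠ t in nhds (0:ℝ), x + t • c ∈ U := by
    have := hcont.continuousAt (x := (0:ℝ))
    rw [ContinuousAt] at this
    simp only [zero_smul, add_zero] at this
    exact this.eventually_mem hU
  have hnzev : ∀ᶠ t in nhds (0:ℝ), ∀ j ∈ supp x, x j + t * c j ≠ 0 := by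
    rw [Filter.eventually_all_finset]
    intro j hj
    have hxj : x j ≠ 0 := by simpa [supp] using hj
    have hcj : Continuous fun t : ℝ => x j + t * c j := continuous_const.add (continuous_id.mul continuous_const)
    have := hcj.continuousAt (x := (0:ℝ))
    rw [ContinuousAt] at this
    simp only [zero_mul, add_zero] at this
    exact this.eventually_ne hxj
  have hpunct : ∀ᶠ t in nhdsWithin (0:ℝ) {(0:ℝ)}ᶜ,
      (x + t • c ∈ U ∧ ∀ j ∈ supp x, x j + t * c j ≠ 0) ∧ t ≠ 0 := by
    refine Filter.Eventually.and (Filter.Eventually.filter_mono nhdsWithin_le_nhds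
      (hUev.and hnzev)) ?_
    exact eventually_mem_nhdsWithin
  obtain ⟨t, ⟨htU, htnz⟩, ht0⟩ := hpunct.exists
  refine ⟨x + t • c, htU, ?_, ?_, ?_⟩
  · -- y ≠ x
    intro h
    have : x (i0 : Fin n) + t * c (i0 : Fin n) = x (i0 : Fin n) := by
      have := congrFun h (i0 : Fin n)
      simpa using this
    have hci0 : c (i0 : Fin n) = g i0 := by simp [hc, i0.2]
    have : t * c (i0 : Fin n) = 0 := by linarith
    rcases mul_eq_zero.mp this with h | h
    · exact ht0 h
    · rw [hci0] at h; exact hi0 h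
  · -- MStat
    have hsupp : ∀ j, (x + t • c) j ≠ 0 → x j ≠ 0 := by
      intro j hyj hxj
      have hj : j ∉ supp x := by simp [supp, hxj]
      apply hyj
      simp [hxj, hcsupp j hj]
    have hgrad : grad A b (x + t • c) = grad A b x := by
      unfold grad
      rw [Matrix.mulVec_add, Matrix.mulVec_smul, hAc]
      simp
    intro j hyj
    rw [hgrad]
    exact hstat j (hsupp j hyj)
  · -- same support
    ext j
    simp only [supp, Finset.mem_filter, Finset.mem_univ, true_and]
    constructor
    · intro hyj
      by_contra hxj
      have hj : j ∉ supp x := by simp [supp, hxj]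
      apply hyj
      simp [hxj, hcsupp j hj]
    · intro hxj
      have hj : j ∈ supp x := by simp [supp, hxj]
      have := htnz j hj
      simpa using this
end
end

section
/- If A ∈ ℝ^{m×n} is s-regular with s ≤ m and a ≥ ‖b‖², then the lower level set M^a = {x ∈ ℝⁿ : ‖x‖₀ ≤ s, ‖Ax−b‖² ≤ a} is path-connected. -/
open Matrix Finset
open scoped Classical

noncomputable section

theorem stmt_13 {m n s : ℕ} (A : Matrix (Fin m) (Fin n) ℝ) (b : Fin m → ℝ)
    (hA : sReg A s) (hs : s ≤ m) (a : ℝ) (ha : ∑ i, (b i) ^ 2 ≤ a) :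
    IsPathConnected
      {x : Fin n → ℝ | norm0 x ≤ s ∧ ∑ i, (A.mulVec x i - b i) ^ 2 ≤ a} := by
  have h0 : (0 : Fin n → ℝ) ∈
      {x : Fin n → ℝ | norm0 x ≤ s ∧ ∑ i, (A.mulVec x i - b i) ^ 2 ≤ a} := by
    constructor
    · have : supp (0 : Fin n → ℝ) = ∅ := by
        simp [supp]
      simp [norm0, this]
    · simpa [Matrix.mulVec_zero] using ha
  refine ⟨0, h0, fun {y} hy => ?_⟩
  refine ⟨⟨⟨fun t => (t : ℝ) • y, by continuity⟩, by simp, by simp⟩, fun t => ?_⟩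
  obtain ⟨hy1, hy2⟩ := hy
  have ht0 : (0:ℝ) ≤ (t : ℝ) := t.2.1
  have ht1 : (0:ℝ) ≤ 1 - (t : ℝ) := by linarith [t.2.2]
  constructor
  · refine le_trans ?_ hy1
    apply Finset.card_le_card
    intro j hj
    simp only [supp, Finset.mem_filter, Finset.mem_univ, true_and] at hj ⊢
    intro h
    simp [Pi.smul_apply, h] at hj
  · have hmv : A.mulVec ((t : ℝ) • y) = (t : ℝ) • A.mulVec y := by
      rw [Matrix.mulVec_smul]
    have key : ∀ i, (A.mulVec ((t:ℝ) • y) i - b i) ^ 2 ≤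
        (t:ℝ) * (A.mulVec y i - b i) ^ 2 + (1 - (t:ℝ)) * (b i) ^ 2 := by
      intro i
      rw [hmv]
      simp only [Pi.smul_apply, smul_eq_mul]
      nlinarith [mul_nonneg (mul_nonneg ht0 ht1) (sq_nonneg (A.mulVec y i)),
        sq_nonneg (A.mulVec y i - b i), sq_nonneg (b i)]
    calc ∑ i, (A.mulVec ((t:ℝ) • y) i - b i) ^ 2
        ≤ ∑ i, ((t:ℝ) * (A.mulVec y i - b i) ^ 2 + (1 - (t:ℝ)) * (b i) ^ 2) :=
          Finset.sum_le_sum fun i _ => key i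
      _ = (t:ℝ) * (∑ i, (A.mulVec y i - b i) ^ 2) + (1 - (t:ℝ)) * ∑ i, (b i) ^ 2 := by
          rw [Finset.sum_add_distrib, Finset.mul_sum, Finset.mul_sum]
      _ ≤ (t:ℝ) * a + (1 - (t:ℝ)) * a := by
          gcongr
      _ = a := by ring
end
end

section
/- For the perturbed problem with A = I₂, b = (ε, ε), ε > 0, s = 1 (minimize (1/2)(x₁−ε)² + (1/2)(x₂−ε)² s.t. ‖x‖₀ ≤ 1), the points (ε,0) and (0,ε) are the exactly two global minimizers, and (0,0) is a nondegenerate M-stationary point that is not a local minimizer. -/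
open Matrix Finset
open scoped Classical

noncomputable section

lemma norm0_le_one_iff (y : Fin 2 → ℝ) : norm0 y ≤ 1 ↔ y 0 = 0 ∨ y 1 = 0 := by
  constructor
  · intro h
    by_contra hc
    push_neg at hc
    have hs : supp y = Finset.univ := by
      ext j
      simp only [supp, Finset.mem_filter, Finset.mem_univ, true_and]
      fin_cases j
      · simpa using hc.1
      · simpa using hc.2
    rw [norm0, hs] at h
    simp at h
  · rintro (h | h)
    · have hs : supp y ⊆ {1} := by
        intro j hj
        simp only [supp, Finset.mem_filter, Finset.mem_univ, true_and] at hj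
        fin_cases j
        · exact absurd h hj
        · simp
      calc norm0 y ≤ ({1} : Finset (Fin 2)).card := Finset.card_le_card hs
        _ = 1 := rfl
    · have hs : supp y ⊆ {0} := by
        intro j hj
        simp only [supp, Finset.mem_filter, Finset.mem_univ, true_and] at hj
        fin_cases j
        · simp
        · exact absurd h hj
      calc norm0 y ≤ ({0} : Finset (Fin 2)).card := Finset.card_le_card hs
        _ = 1 := rfl

lemma objf_eq (ε : ℝ) (x : Fin 2 → ℝ) :
    objf (1 : Matrix (Fin 2) (Fin 2) ℝ) ![ε, ε] x
      = (1/2) * ((x 0 - ε)^2 + (x 1 - ε)^2) := by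
  simp [objf, Matrix.one_mulVec, Fin.sum_univ_two]

lemma supp_zero (n : ℕ) : supp (0 : Fin n → ℝ) = ∅ := by
  simp [supp]

theorem stmt_17 (ε : ℝ) (hε : 0 < ε) :
    let A : Matrix (Fin 2) (Fin 2) ℝ := 1
    let b : Fin 2 → ℝ := ![ε, ε]
    ({x : Fin 2 → ℝ | norm0 x ≤ 1 ∧ ∀ y : Fin 2 → ℝ, norm0 y ≤ 1 → objf A b x ≤ objf A b y} =
      {![ε, 0], ![0, ε]}) ∧
    MStat A b 0 ∧ NDeg A b 1 0 ∧ ¬ IsLocalMinSR A b 1 0 := by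

  intro A b
  have hn10 : norm0 (![ε, 0] : Fin 2 → ℝ) ≤ 1 := by
    rw [norm0_le_one_iff]; right; simp
  have hn01 : norm0 (![0, ε] : Fin 2 → ℝ) ≤ 1 := by
    rw [norm0_le_one_iff]; left; simp
  refine ⟨?_, ?_, ?_, ?_⟩
  · ext x
    simp only [Set.mem_setOf_eq, Set.mem_insert_iff, Set.mem_singleton_iff]
    constructor
    · rintro ⟨hx, hmin⟩
      have h1 := hmin ![ε, 0] hn10
      rw [objf_eq, objf_eq] at h1
      simp at h1
      rw [norm0_le_one_iff] at hx
      rcases hx with h | h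
      · right
        funext j
        fin_cases j
        · exact h
        · show x 1 = ε
          nlinarith [sq_nonneg (x 0 - ε), sq_nonneg (x 1 - ε)]
      · left
        funext j
        fin_cases j
        · show x 0 = ε
          nlinarith [sq_nonneg (x 0 - ε), sq_nonneg (x 1 - ε)]
        · exact h
    · rintro (rfl | rfl) <;>
      · refine ⟨by assumption, fun y hy => ?_⟩
        rw [objf_eq, objf_eq]
        rw [norm0_le_one_iff] at hy
        rcases hy with h | h <;> simp [h] <;> nlinarith [sq_nonneg (y 0 - ε), sq_nonneg (y 1 - ε)]
  · intro j hj
    simp at hj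
  · constructor
    · intro _ i _
      show grad A b 0 i ≠ 0
      have : grad A b 0 i = -ε := by
        simp only [grad, A, b, Matrix.transpose_one, Matrix.one_mulVec, Matrix.mulVec_zero]
        fin_cases i <;> simp
      rw [this]
      exact neg_ne_zero.mpr hε.ne'
    · rw [show supp (0 : Fin 2 → ℝ) = ∅ from supp_zero 2]
      exact linearIndependent_empty_type
  · rintro ⟨-, U, hU, hmin⟩
    rcases Metric.mem_nhds_iff.mp hU with ⟨r, hr, hball⟩
    set δ := min (r/2) ε with hδdef
    have hδpos : 0 < δ := lt_min (by linarith) hε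
    have hδε : δ ≤ ε := min_le_right _ _
    have hδr : δ < r := lt_of_le_of_lt (min_le_left _ _) (by linarith)
    have hy : (![δ, 0] : Fin 2 → ℝ) ∈ U := by
      apply hball
      rw [Metric.mem_ball, dist_pi_lt_iff hr]
      intro i
      fin_cases i <;> simp [Real.dist_eq, abs_of_pos, hδpos, hr, abs_of_nonneg hδpos.le, hδr]
    have hny : norm0 (![δ, 0] : Fin 2 → ℝ) ≤ 1 := by
      rw [norm0_le_one_iff]; right; simp
    have := hmin _ hy hny
    rw [objf_eq, objf_eq] at this
    simp at this
    nlinarith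
end
end

section
/- Let x̄ be an M-stationary point of min (1/2)‖Ax−b‖² s.t. ‖x‖₀ ≤ s with ‖x̄‖₀ < s satisfying ND2 (the support columns A_S are linearly independent), and suppose there exists ī ∉ S with (Aᵀ(Ax̄−b))_ī = 0 and rank(A_{S∪{ī}}) < |S| + 1. Then x̄ is not an isolated M-stationary point. -/
open Matrix Finset
open scoped Classical

noncomputable section

theorem stmt_19 {m n s : ℕ} (A : Matrix (Fin m) (Fin n) ℝ) (b : Fin m → ℝ)
    (x : Fin n → ℝ) (hstat : MStat A b x) (hlt : norm0 x < s)
    (hnd2 : LinearIndependent ℝ (fun j : ↥(supp x) => fun i => A i (j : Fin n)))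
    (ibar : Fin n) (hibar : ibar ∉ supp x) (hgrad : grad A b x ibar = 0)
    (hrk : (cols A (insert ibar (supp x))).rank < norm0 x + 1) :
    ∀ U ∈ nhds x, ∃ y ∈ U, y ≠ x ∧ norm0 y ≤ s ∧ MStat A b y := by
  intro U hU
  set T : Finset (Fin n) := insert ibar (supp x) with hT
  have hcardT : T.card = norm0 x + 1 := by
    rw [hT, Finset.card_insert_of_notMem hibar]; rfl
  -- columns of A over T are linearly dependent
  have hdep : ¬ LinearIndependent ℝ (fun j : ↥T => fun i => A i (j : Fin n)) := by
    intro hli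
    have : (cols A T)ᵀ.rank = Fintype.card ↥T := hli.rank_matrix
    rw [Matrix.rank_transpose, Fintype.card_coe, hcardT] at this
    omega
  obtain ⟨g, hsum, j₀, hj₀⟩ := Fintype.not_linearIndependent_iff.mp hdep
  -- define the direction d
  set d : Fin n → ℝ := fun j => if h : j ∈ T then g ⟨j, h⟩ else 0 with hd
  have hdj₀ : d (j₀ : Fin n) ≠ 0 := by
    simpa [hd, (j₀ : Fin n).2, j₀.2] using hj₀
  have hAd : A.mulVec d = 0 := by
    funext i
    have := congrFun hsum i
    simp only [Finset.sum_apply, Pi.smul_apply, smul_eq_mul, Pi.zero_apply] at this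
    calc A.mulVec d i = ∑ j : Fin n, A i j * d j := by
          simp [Matrix.mulVec, dotProduct, mul_comm]
      _ = ∑ j ∈ T, A i j * d j := by
          rw [← Finset.sum_subset (Finset.subset_univ T)]
          intro j _ hj
          simp [hd, hj]
      _ = ∑ j : ↥T, g j * A i (j : Fin n) := by
          rw [← Finset.sum_coe_sort T]
          exact Finset.sum_congr rfl fun j _ => by simp [hd, j.2, mul_comm]
      _ = 0 := this
  -- properties of y := x + c • d
  have hkey : ∀ c : ℝ, c ≠ 0 → (x + c • d) ≠ x ∧ norm0 (x + c • d) ≤ s ∧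
      MStat A b (x + c • d) := by
    intro c hc
    have hAy : A.mulVec (x + c • d) = A.mulVec x := by
      rw [Matrix.mulVec_add, Matrix.mulVec_smul, hAd]; simp
    have hgy : grad A b (x + c • d) = grad A b x := by
      unfold grad; rw [hAy]
    have hsupp : ∀ j, (x + c • d) j ≠ 0 → j ∈ T := by
      intro j hj
      by_contra hjT
      have hx0 : x j = 0 := by
        by_contra h
        exact hjT (Finset.mem_insert_of_mem (by simp [supp, h]))
      have hd0 : d j = 0 := by simp [hd, hjT]
      exact hj (by simp [hx0, hd0])
    refine ⟨?_, ?_, ?_⟩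
    · intro h
      have : c * d (j₀ : Fin n) = 0 := by
        have := congrFun h (j₀ : Fin n)
        simpa using this
      rcases mul_eq_zero.mp this with h' | h'
      · exact hc h'
      · exact hdj₀ h'
    · have : supp (x + c • d) ⊆ T := fun j hj => hsupp j (by simpa [supp] using hj)
      calc norm0 (x + c • d) ≤ T.card := Finset.card_le_card this
        _ = norm0 x + 1 := hcardT
        _ ≤ s := hlt
    · intro j hj
      rw [hgy]
      rcases Finset.mem_insert.mp (hsupp j hj) with h | h
      · rw [h]; exact hgrad
      · exact hstat j (by simpa [supp] using h)
  -- choose small c with x + c • d ∈ U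
  have hcont : Filter.Tendsto (fun c : ℝ => x + c • d) (nhds 0) (nhds x) := by
    have hco : Continuous (fun c : ℝ => x + c • d) :=
      continuous_const.add (continuous_id.smul continuous_const)
    simpa using hco.tendsto 0
  have hmem : {c : ℝ | x + c • d ∈ U} ∈ nhds (0 : ℝ) := hcont hU
  have : ({c : ℝ | x + c • d ∈ U} ∩ {(0:ℝ)}ᶜ).Nonempty := by
    apply Filter.nonempty_of_mem (f := nhdsWithin (0:ℝ) {(0:ℝ)}ᶜ)
    exact Filter.inter_mem (nhdsWithin_le_nhds hmem) self_mem_nhdsWithin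
  obtain ⟨c, hcU, hc0⟩ := this
  obtain ⟨hne, hn0, hms⟩ := hkey c (by simpa using hc0)
  exact ⟨x + c • d, hcU, hne, hn0, hms⟩
end
end
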